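/- The degree of a second-kind composition of second-order polynomials composes: for second-order polynomials P, Q over ℕ and all d ∈ ℕ, Deg(P∘Q)(d) = Deg(P)(Deg(Q)(d)), i.e., the arctic degree of P∘Q evaluated at d equals the arctic degree of P evaluated at the value Deg(Q)(d). -/
import Mathlib


/-- Arctic univariate (first-order) polynomials over ℕ:
terms built from constants, the variable `D`, `+`, `·`, and `max`. -/
inductive Arctic where
  | const : ℕ → Arctic
  | varD : Arctic
  | add : Arctic → Arctic → Arctic
  | mul : Arctic → Arctic → Arctic
  | amax : Arctic → Arctic → Arctic

/-- Evaluation of an arctic polynomial at `d : ℕ`. -/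
def Arctic.eval : Arctic → ℕ → ℕ
  | const c, _ => c
  | varD, d => d
  | add p q, d => p.eval d + q.eval d
  | mul p q, d => p.eval d * q.eval d
  | amax p q, d => max (p.eval d) (q.eval d)

/-- Second-order polynomials over ℕ: terms over `1`, `N`, `+`, `·`, `Λ(·)`. -/
inductive SOP where
  | one : SOP
  | varN : SOP
  | add : SOP → SOP → SOP
  | mul : SOP → SOP → SOP
  | lam : SOP → SOP

/-- Semantics of a second-order polynomial at `n : ℕ` and `ℓ : ℕ → ℕ`. -/
def SOP.eval : SOP → ℕ → (ℕ → ℕ) → ℕ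
  | one, _, _ => 1
  | varN, n, _ => n
  | add P Q, n, l => P.eval n l + Q.eval n l
  | mul P Q, n, l => P.eval n l * Q.eval n l
  | lam P, n, l => l (P.eval n l)

/-- First-kind composition `P ⋆ Q`: substitute `Q` for the variable `N` in `P`. -/
def SOP.star : SOP → SOP → SOP
  | .one, _ => .one
  | .varN, Q => Q
  | .add P₁ P₂, Q => .add (P₁.star Q) (P₂.star Q)
  | .mul P₁ P₂, Q => .mul (P₁.star Q) (P₂.star Q)
  | .lam P, Q => .lam (P.star Q)

/-- Second-kind composition `P ∘ Q`: substitute `Q` for the variable `Λ` in `P`. -/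
def SOP.compL : SOP → SOP → SOP
  | .one, _ => .one
  | .varN, _ => .varN
  | .add P₁ P₂, Q => .add (P₁.compL Q) (P₂.compL Q)
  | .mul P₁ P₂, Q => .mul (P₁.compL Q) (P₂.compL Q)
  | .lam P, Q => Q.star (P.compL Q)

/-- The second-order degree: an arctic univariate polynomial. -/
def SOP.deg : SOP → Arctic
  | .one => .const 0
  | .varN => .const 1
  | .add P Q => .amax P.deg Q.deg
  | .mul P Q => .add P.deg Q.deg
  | .lam P => .mul .varD P.deg

lemma SOP.deg_star (Q R : SOP) (d : ℕ) :
    (Q.star R).deg.eval d = Q.deg.eval d * R.deg.eval d := by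
  induction Q with
  | one => simp [SOP.star, SOP.deg, Arctic.eval]
  | varN => simp [SOP.star, SOP.deg, Arctic.eval]
  | add P₁ P₂ ih1 ih2 =>
      simp [SOP.star, SOP.deg, Arctic.eval, ih1, ih2]
  | mul P₁ P₂ ih1 ih2 =>
      simp [SOP.star, SOP.deg, Arctic.eval, ih1, ih2, Nat.add_mul]
  | lam P ih =>
      simp [SOP.star, SOP.deg, Arctic.eval, ih, Nat.mul_assoc]

/-- The degree of the second-kind composition composes. -/
theorem SOP.deg_compL (P Q : SOP) (d : ℕ) :
    (P.compL Q).deg.eval d = P.deg.eval (Q.deg.eval d) := by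
  induction P with
  | one => simp [SOP.compL, SOP.deg, Arctic.eval]
  | varN => simp [SOP.compL, SOP.deg, Arctic.eval]
  | add P₁ P₂ ih1 ih2 => simp [SOP.compL, SOP.deg, Arctic.eval, ih1, ih2]
  | mul P₁ P₂ ih1 ih2 => simp [SOP.compL, SOP.deg, Arctic.eval, ih1, ih2]
  | lam P ih => simp [SOP.compL, SOP.deg, Arctic.eval, SOP.deg_star, ih]
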